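/- Let (X,F) be a sheaved pure d-dimensional finite simplicial complex, 0 ≤ k ≤ d, and f, g ∈ C^k(X,F). Suppose f is minimal (i.e., ‖f‖_ws ≤ ‖f − b‖_ws for all b ∈ B^k(X,F)), supp g ⊆ supp f, and g(x) = f(x) for all x ∈ supp g. Then g is minimal. -/

import Mathlib

open Finset

variable {V : Type} [LinearOrder V]

/-- A (finite) simplicial complex: a nonempty collection of finite subsets of the vertex
type `V`, closed under taking subsets. -/
def IsComplex (X : Finset (Finset V)) : Prop :=
  X.Nonempty ∧ ∀ s ∈ X, ∀ t ⊆ s, t ∈ X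

/-- The faces of `X` having exactly `j` vertices, i.e. of dimension `j - 1`. -/
def faceSet (X : Finset (Finset V)) (j : ℕ) : Finset (Finset V) :=
  X.filter fun s => s.card = j

/-- `X` is pure of dimension `d`: every face is contained in a face with `d + 1` vertices. -/
def IsPure (X : Finset (Finset V)) (d : ℕ) : Prop :=
  ∀ s ∈ X, ∃ t ∈ X, s ⊆ t ∧ t.card = d + 1

/-- The canonical weight of a face `x` of a pure `d`-dimensional complex `X`:
`w(x) = C(d+1, |x|)⁻¹ ⬝ |X(d)|⁻¹ ⬝ #{y ∈ X(d) : x ⊆ y}`. -/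
noncomputable def wt (X : Finset (Finset V)) (d : ℕ) (x : Finset V) : ℝ :=
  ((d + 1).choose x.card : ℝ)⁻¹ * ((faceSet X (d + 1)).card : ℝ)⁻¹ *
    (((faceSet X (d + 1)).filter fun y => x ⊆ y).card : ℝ)
/-- A sheaf of `R`-modules on the simplicial complex `X`: an `R`-module `Stalk x` for every
face `x`, and compatible restriction maps along inclusions of faces. -/
structure PSheaf (R : Type) [CommRing R] {V : Type} (X : Finset (Finset V)) where
  Stalk : Finset V → Type
  [stalkAddCommGroup : ∀ x, AddCommGroup (Stalk x)]
  [stalkModule : ∀ x, Module R (Stalk x)]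
  res : ∀ {x y : Finset V}, x ∈ X → y ∈ X → x ⊆ y → (Stalk x →ₗ[R] Stalk y)
  res_refl : ∀ {x : Finset V} (hx : x ∈ X) (v : Stalk x),
    res hx hx (Finset.Subset.refl x) v = v
  res_trans : ∀ {x y z : Finset V} (hx : x ∈ X) (hy : y ∈ X) (hz : z ∈ X)
    (hxy : x ⊆ y) (hyz : y ⊆ z) (v : Stalk x),
    res hy hz hyz (res hx hy hxy v) = res hx hz (hxy.trans hyz) v

attribute [instance] PSheaf.stalkAddCommGroup PSheaf.stalkModule

variable {R : Type} [CommRing R]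

/-- The faces of `X` of dimension `k`, i.e. with `k + 1` vertices. -/
def Face (X : Finset (Finset V)) (k : ℕ) : Type :=
  {s : Finset V // s ∈ X ∧ s.card = k + 1}

/-- `k`-cochains with coefficients in the sheaf `S`. -/
abbrev Cochain {X : Finset (Finset V)} (S : PSheaf R X) (k : ℕ) : Type :=
  (x : Face X k) → S.Stalk x.1
variable {X : Finset (Finset V)}

/-- The simplicial coboundary map (with signs determined by the linear order on the
vertices): `(δ f)(y) = ∑_{v ∈ y} (-1)^{#\{a ∈ y : a < v\}} ⬝ res_{y ← y∖v} f(y ∖ v)`. -/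
noncomputable def delta (hX : IsComplex X) (S : PSheaf R X) (k : ℕ) (f : Cochain S k) :
    Cochain S (k + 1) := fun y =>
  ∑ v ∈ y.1.attach,
    ((-1 : R) ^ (y.1.filter (fun a => a < v.1)).card) •
      (S.res (hX.2 y.1 y.2.1 (y.1.erase v.1) (Finset.erase_subset v.1 y.1)) y.2.1
        (Finset.erase_subset v.1 y.1)
        (f ⟨y.1.erase v.1,
            hX.2 y.1 y.2.1 (y.1.erase v.1) (Finset.erase_subset v.1 y.1),
            by rw [Finset.card_erase_of_mem v.2, y.2.2]; omega⟩))

/-- The coboundary map as a linear map. -/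
noncomputable def deltaHom (hX : IsComplex X) (S : PSheaf R X) (k : ℕ) :
    Cochain S k →ₗ[R] Cochain S (k + 1) where
  toFun := delta hX S k
  map_add' f g := by
    funext y
    change _ = delta hX S k f y + delta hX S k g y
    simp only [delta]
    rw [← Finset.sum_add_distrib]
    refine Finset.sum_congr rfl fun v _ => ?_
    rw [← smul_add, ← map_add]
    rfl
  map_smul' c f := by
    funext y
    change _ = c • delta hX S k f y
    simp only [delta]
    rw [Finset.smul_sum]
    refine Finset.sum_congr rfl fun v _ => ?_
    rw [smul_comm c]
    congr 1
    exact map_smul _ c _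

/-- The coboundaries: `B⁰ = 0` and `B^{k+1} = range (δ_k)`. -/
noncomputable def Bmod (hX : IsComplex X) (S : PSheaf R X) :
    (k : ℕ) → Submodule R (Cochain S k)
  | 0 => ⊥
  | (k + 1) => LinearMap.range (deltaHom hX S k)

/-- Sheaf cohomology `H^k(X, S) = Z^k / B^k`, computed from the simplicial cochain
complex with coefficients in `S`. -/
noncomputable abbrev Hcoh (hX : IsComplex X) (S : PSheaf R X) (k : ℕ) : Type :=
  ↥(LinearMap.ker (deltaHom hX S k)) ⧸
    Submodule.comap (LinearMap.ker (deltaHom hX S k)).subtype (Bmod hX S k)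

open scoped Classical

/-- The weighted support norm of a `k`-cochain: `‖f‖_ws = ∑_{x ∈ supp f} w(x)`. -/
noncomputable def wsNorm {R : Type} [CommRing R] {X : Finset (Finset V)}
    {S : PSheaf R X} (d : ℕ) {k : ℕ} (f : Cochain S k) : ℝ :=
  ∑ x ∈ (faceSet X (k + 1)).attach,
    if f ⟨x.1, (Finset.mem_filter.mp x.2).1, (Finset.mem_filter.mp x.2).2⟩ ≠ 0
    then wt X d x.1 else 0

/-- `b` is a `k`-coboundary: `B⁰ = 0` and `B^{k+1} = im (δ_k)` (for a non-augmented
sheaf, `C^{-1} = 0`). -/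
def IsCobound (hX : IsComplex X) {R : Type} [CommRing R] (S : PSheaf R X) :
    (k : ℕ) → Cochain S k → Prop
  | 0, b => b = 0
  | (k + 1), b => ∃ g : Cochain S k, delta hX S k g = b

/-! Pointwise, the weight of a face counted in `‖g‖ + ‖f - b‖` is also counted in
`‖g - b‖ + ‖f‖`: where `g` vanishes, `g - b = -b` is nonzero whenever `f - b` is nonzero and `f`
is not; where it does not, `g = f`. Summing, `‖g‖ - ‖g - b‖ ≤ ‖f‖ - ‖f - b‖ ≤ 0`. -/

lemma wt_nonneg (X : Finset (Finset V)) (d : ℕ) (x : Finset V) : 0 ≤ wt X d x := by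
  unfold wt
  positivity

lemma ite_ne_zero_add_ite_sub_ne_zero_le {M : Type*} [AddGroup M] {f g b : M}
    (hagree : g ≠ 0 → g = f) {w : ℝ} (hw : 0 ≤ w) :
    (if g ≠ 0 then w else 0) + (if f - b ≠ 0 then w else 0) ≤
      (if g - b ≠ 0 then w else 0) + (if f ≠ 0 then w else 0) := by
  by_cases hg : g = 0
  · subst hg
    simp only [ne_eq, not_true_eq_false, if_false, zero_add, zero_sub, neg_eq_zero]
    by_cases hb : b = 0
    · simp [hb]
    · split_ifs <;> linarith
  · rw [hagree hg, add_comm]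

lemma wsNorm_add_wsNorm_sub_le {S : PSheaf R X} (d : ℕ) {k : ℕ} {f g : Cochain S k}
    (hagree : ∀ x : Face X k, g x ≠ 0 → g x = f x) (b : Cochain S k) :
    wsNorm d g + wsNorm d (f - b) ≤ wsNorm d (g - b) + wsNorm d f := by
  unfold wsNorm
  rw [← Finset.sum_add_distrib, ← Finset.sum_add_distrib]
  exact Finset.sum_le_sum fun x _ =>
    ite_ne_zero_add_ite_sub_ne_zero_le (hagree _) (wt_nonneg X d x.1)

theorem minimal_of_agreeing_subcochain_general {R : Type} [CommRing R]
    (X : Finset (Finset V)) (d k : ℕ) (hX : IsComplex X)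
    (S : PSheaf R X) (f g : Cochain S k)
    (hfmin : ∀ b : Cochain S k, IsCobound hX S k b → wsNorm d f ≤ wsNorm d (f - b))
    (hagree : ∀ x : Face X k, g x ≠ 0 → g x = f x) :
    ∀ b : Cochain S k, IsCobound hX S k b → wsNorm d g ≤ wsNorm d (g - b) := by
  intro b hb
  linarith [hfmin b hb, wsNorm_add_wsNorm_sub_le d hagree b]

/-- Let `(X, S)` be a sheaved pure `d`-dimensional finite complex,
`0 ≤ k ≤ d`, and `f, g ∈ C^k(X, S)`.  If `f` is minimal (`‖f‖_ws ≤ ‖f - b‖_ws` for every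
coboundary `b`), `supp g ⊆ supp f`, and `g` agrees with `f` on `supp g`, then `g` is
minimal. -/
theorem minimal_of_agreeing_subcochain {R : Type} [CommRing R]
    (X : Finset (Finset V)) (d k : ℕ) (hX : IsComplex X) (hpure : IsPure X d)
    (hk : k ≤ d) (S : PSheaf R X) (f g : Cochain S k)
    (hfmin : ∀ b : Cochain S k, IsCobound hX S k b → wsNorm d f ≤ wsNorm d (f - b))
    (hsupp : ∀ x : Face X k, g x ≠ 0 → f x ≠ 0)
    (hagree : ∀ x : Face X k, g x ≠ 0 → g x = f x) :
    ∀ b : Cochain S k, IsCobound hX S k b → wsNorm d g ≤ wsNorm d (g - b) :=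
  minimal_of_agreeing_subcochain_general X d k hX S f g hfmin hagree
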